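/- arXiv:2305.00372 — 4 statements merged into one kernel-verified Lean document; each statement's English description precedes it below -/
import Mathlib

section
/- Let X be a core compactly generated space. Then the standard D-completion X^d of X is again core compactly generated. -/
open Set TopologicalSpace

universe u

section OrderDefs

variable {X : Type u}

/-- `U` is an upper set with respect to the relation `le`. -/
def IsUpperSetWrt (le : X → X → Prop) (U : Set X) : Prop :=
  ∀ ⦃x⦄, x ∈ U → ∀ ⦃y⦄, le x y → y ∈ U

/-- `s` is an upper bound of `D` with respect to `le`. -/
def IsUBWrt (le : X → X → Prop) (D : Set X) (s : X) : Prop := ∀ d ∈ D, le d s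

/-- `s` is a least upper bound (supremum) of `D` with respect to `le`. -/
def IsSupWrt (le : X → X → Prop) (D : Set X) (s : X) : Prop :=
  IsUBWrt le D s ∧ ∀ t, IsUBWrt le D t → le s t

/-- `D` is a (nonempty) directed subset with respect to `le`. -/
def DirectedSubset (le : X → X → Prop) (D : Set X) : Prop :=
  D.Nonempty ∧ ∀ a ∈ D, ∀ b ∈ D, ∃ c ∈ D, le a c ∧ le b c

/-- `U` is Scott open with respect to `le`: an upper set inaccessible by directed suprema. -/
def ScottOpenWrt (le : X → X → Prop) (U : Set X) : Prop :=
  IsUpperSetWrt le U ∧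
    ∀ D, DirectedSubset le D → ∀ s, IsSupWrt le D s → s ∈ U → (D ∩ U).Nonempty

/-- The Scott topology determined by the relation `le`. -/
def scottTop (le : X → X → Prop) : TopologicalSpace X where
  IsOpen := ScottOpenWrt le
  isOpen_univ := by
    refine ⟨fun x _ y _ => trivial, fun D hD s _ _ => ?_⟩
    obtain ⟨d, hd⟩ := hD.1
    exact ⟨d, hd, trivial⟩
  isOpen_inter := by
    rintro U V ⟨hUup, hUd⟩ ⟨hVup, hVd⟩
    refine ⟨fun x hx y hxy => ⟨hUup hx.1 hxy, hVup hx.2 hxy⟩, ?_⟩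
    rintro D hD s hs ⟨hsU, hsV⟩
    obtain ⟨a, haD, haU⟩ := hUd D hD s hs hsU
    obtain ⟨b, hbD, hbV⟩ := hVd D hD s hs hsV
    obtain ⟨c, hcD, hac, hbc⟩ := hD.2 a haD b hbD
    exact ⟨c, hcD, hUup haU hac, hVup hbV hbc⟩
  isOpen_sUnion := by
    intro S hS
    refine ⟨fun x hx y hxy => ?_, ?_⟩
    · obtain ⟨U, hU, hxU⟩ := hx
      exact ⟨U, hU, (hS U hU).1 hxU hxy⟩
    · rintro D hD s hs ⟨U, hU, hsU⟩
      obtain ⟨d, hdD, hdU⟩ := (hS U hU).2 D hD s hs hsU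
      exact ⟨d, hdD, U, hU, hdU⟩

end OrderDefs

section TopDefs

variable {X : Type u} [TopologicalSpace X]

/-- The specialization order of a topological space: `x ≤ y` iff `x ∈ cl {y}`. -/
def specLE (x y : X) : Prop := x ∈ closure ({y} : Set X)

/-- The upward closure of `A` in the specialization order. -/
def upSet (A : Set X) : Set X := {y | ∃ a ∈ A, specLE a y}

/-- `V` is way below `U`: every open cover of `U` admits a finite subfamily covering `V`. -/
def WayBelow (V U : Set X) : Prop :=
  ∀ S : Set (Set X), (∀ W ∈ S, IsOpen W) → U ⊆ ⋃₀ S →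
    ∃ F : Finset (Set X), ↑F ⊆ S ∧ V ⊆ ⋃₀ (F : Set (Set X))

/-- A space is core compact if its lattice of open sets is continuous, i.e. every open
set is the union of the open sets way below it. -/
def CoreCompact (X : Type u) [TopologicalSpace X] : Prop :=
  ∀ U : Set X, IsOpen U → ∀ x ∈ U, ∃ V : Set X, IsOpen V ∧ x ∈ V ∧ WayBelow V U

/-- `V` is open in the core compactly generated topology:
preimages under every continuous map from a core compact space are open. -/
def ccgOpen (X : Type u) [TopologicalSpace X] (V : Set X) : Prop :=
  ∀ (C : Type u) (tC : TopologicalSpace C), CoreCompact C →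
    ∀ ρ : C → X, Continuous ρ → IsOpen (ρ ⁻¹' V)

/-- The core compactly generated topology `𝒞X`. -/
def ccgTopology (X : Type u) [TopologicalSpace X] : TopologicalSpace X where
  IsOpen := ccgOpen X
  isOpen_univ := by intro C tC _ ρ hρ; simpa using isOpen_univ
  isOpen_inter := by
    intro U V hU hV C tC hc ρ hρ
    exact (hU C tC hc ρ hρ).inter (hV C tC hc ρ hρ)
  isOpen_sUnion := by
    intro S hS C tC hc ρ hρ
    rw [preimage_sUnion]
    exact isOpen_biUnion fun t ht => hS t ht C tC hc ρ hρ

/-- A space is core compactly generated if its topology coincides with the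
core compactly generated topology. -/
def CCGenerated (X : Type u) [t : TopologicalSpace X] : Prop := ccgTopology X = t

/-- A set is saturated if it is the intersection of the open sets containing it. -/
def Saturated (K : Set X) : Prop := K = ⋂₀ {U : Set X | IsOpen U ∧ K ⊆ U}

/-- A T₀ space is well-filtered if every filtered family of nonempty compact saturated sets
whose intersection is contained in an open set has a member contained in that open set. -/
def WellFiltered (X : Type u) [TopologicalSpace X] : Prop :=
  T0Space X ∧ ∀ 𝒦 : Set (Set X), 𝒦.Nonempty →
    (∀ K ∈ 𝒦, K.Nonempty ∧ IsCompact K ∧ Saturated K) →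
    (∀ K₁ ∈ 𝒦, ∀ K₂ ∈ 𝒦, ∃ K₃ ∈ 𝒦, K₃ ⊆ K₁ ∧ K₃ ⊆ K₂) →
    ∀ U : Set X, IsOpen U → ⋂₀ 𝒦 ⊆ U → ∃ K ∈ 𝒦, K ⊆ U

/-- A T₀ space is ω-well-filtered if the well-filteredness condition holds for
countable filtered families of nonempty compact saturated sets. -/
def OmegaWellFiltered (X : Type u) [TopologicalSpace X] : Prop :=
  T0Space X ∧ ∀ K : ℕ → Set X,
    (∀ n, (K n).Nonempty ∧ IsCompact (K n) ∧ Saturated (K n)) →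
    (∀ m n, ∃ k, K k ⊆ K m ∧ K k ⊆ K n) →
    ∀ U : Set X, IsOpen U → (⋂ n, K n) ⊆ U → ∃ n, K n ⊆ U

/-- A space is sober if it is T₀ and every irreducible closed set is the closure of a
(unique) point. -/
def SoberSpace (X : Type u) [TopologicalSpace X] : Prop :=
  T0Space X ∧ ∀ A : Set X, IsIrreducible A → IsClosed A → ∃! x : X, A = closure ({x} : Set X)

/-- A T₀ space is a monotone convergence space if the closure of every directed subset
(in the specialization order) is the closure of a point. -/
def MonotoneConvergenceSpace (X : Type u) [TopologicalSpace X] : Prop :=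
  T0Space X ∧ ∀ D : Set X, DirectedSubset specLE D → ∃ x : X, closure D = closure ({x} : Set X)

/-- The hull-kernel style topology on a family of subsets of `X`, generated by the sets
`U^s = {A | A ∩ U ≠ ∅}` for `U` open in `X`. -/
def hullTop (S : Set X → Prop) : TopologicalSpace {A : Set X // S A} :=
  generateFrom {s : Set {A : Set X // S A} |
    ∃ U : Set X, IsOpen U ∧ s = {A : {A : Set X // S A} | ((A : Set X) ∩ U).Nonempty}}

end TopDefs

/-- `A` is tapered: for every continuous map into a monotone convergence space, the image
of `A` has a supremum in the specialization order. -/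
def Tapered (X : Type u) [TopologicalSpace X] (A : Set X) : Prop :=
  ∀ (Y : Type u) (tY : TopologicalSpace Y), @MonotoneConvergenceSpace Y tY →
    ∀ f : X → Y, @Continuous X Y _ tY f →
      ∃ s : Y, IsSupWrt (@specLE Y tY) (f '' A) s

/-- The standard D-completion: closed tapered sets with the hull-kernel topology. -/
def Dcompletion (X : Type u) [TopologicalSpace X] := {A : Set X // IsClosed A ∧ Tapered X A}

def dTop (X : Type u) [TopologicalSpace X] : TopologicalSpace (Dcompletion X) :=
  hullTop (fun A => IsClosed A ∧ Tapered X A)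

/-! The topology of `Xᵈ` is coarser than its core compactly generated topology, so it suffices
to show that a ccg-open `V ⊆ Xᵈ` is `U^d` for `U = η⁻¹ V`, which is open in `X` because `X` is
core compactly generated. Testing `V` against maps from core compact spaces, namely directed
sets with a limit point adjoined, shows that `V` is an upper set inaccessible by directed
suprema. Hence `Vᶜ` with two incomparable tops adjoined is a monotone convergence
space, and testing the taperedness of each `A ∈ V` against it shows that `A` meets `U`. -/

open Topology

section Specialization

variable {α β : Type*} [TopologicalSpace α] [TopologicalSpace β]

theorem specLE_iff_specializes {x y : α} : specLE x y ↔ y ⤳ x :=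
  specializes_iff_mem_closure.symm

theorem specLE_trans {x y z : α} (hxy : specLE x y) (hyz : specLE y z) : specLE x z :=
  specLE_iff_specializes.2 ((specLE_iff_specializes.1 hyz).trans (specLE_iff_specializes.1 hxy))

theorem specLE.map {f : α → β} (hf : Continuous f) {x y : α} (h : specLE x y) :
    specLE (f x) (f y) :=
  specLE_iff_specializes.2 ((specLE_iff_specializes.1 h).map hf)

theorem DirectedSubset.image {f : α → β} (hf : Continuous f) {D : Set α}
    (hD : DirectedSubset specLE D) : DirectedSubset specLE (f '' D) := by
  refine ⟨hD.1.image f, ?_⟩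
  rintro _ ⟨a, ha, rfl⟩ _ ⟨b, hb, rfl⟩
  obtain ⟨c, hc, hac, hbc⟩ := hD.2 a ha b hb
  exact ⟨f c, mem_image_of_mem f hc, hac.map hf, hbc.map hf⟩

theorem closure_eq_closure_singleton_iff {D : Set α} {x : α} :
    closure D = closure {x} ↔ D ⊆ closure {x} ∧ x ∈ closure D := by
  refine ⟨fun h => ⟨h ▸ subset_closure, h ▸ subset_closure rfl⟩, fun ⟨hD, hx⟩ => ?_⟩
  exact (isClosed_closure.closure_subset_iff.2 hD).antisymm
    (isClosed_closure.closure_subset_iff.2 (singleton_subset_iff.2 hx))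

theorem Continuous.closure_image_eq_closure_singleton {f : α → β} (hf : Continuous f)
    {D : Set α} {x : α} (h : closure D = closure {x}) : closure (f '' D) = closure {f x} := by
  rw [closure_eq_closure_singleton_iff] at h ⊢
  have hsub := image_closure_subset_closure_image (s := {x}) hf
  rw [image_singleton] at hsub
  exact ⟨(image_mono h.1).trans hsub,
    image_closure_subset_closure_image hf (mem_image_of_mem f h.2)⟩

theorem MonotoneConvergenceSpace.subtype {Y : Type u} [TopologicalSpace Y]
    (hY : MonotoneConvergenceSpace Y) {F : Set Y}
    (hF : ∀ D ⊆ F, DirectedSubset specLE D → ∀ y, closure D = closure {y} → y ∈ F) :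
    MonotoneConvergenceSpace F := by
  have := hY.1
  refine ⟨inferInstance, fun D hD => ?_⟩
  have hD' := hD.image continuous_subtype_val
  obtain ⟨y, hy⟩ := hY.2 _ hD'
  have hyF := hF _ (image_subset_iff.2 fun x _ => x.2) hD' y hy
  refine ⟨⟨y, hyF⟩, ?_⟩
  rw [IsInducing.subtypeVal.closure_eq_preimage_closure_image,
    IsInducing.subtypeVal.closure_eq_preimage_closure_image, image_singleton, hy]

end Specialization

/-- Finite intersections of generators are handled by directedness, since open sets are upper
sets for the specialization order. -/
theorem mem_closure_of_forall_generator {α : Type*} [t : TopologicalSpace α] {g : Set (Set α)}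
    (ht : t = generateFrom g) {D : Set α} (hD : DirectedSubset specLE D) {x : α}
    (hx : ∀ s ∈ g, x ∈ s → (s ∩ D).Nonempty) : x ∈ closure D := by
  rw [mem_closure_iff]
  intro O hO hxO
  rw [ht] at hO
  induction hO with
  | basic s hs => exact hx s hs hxO
  | univ => simpa using hD.1
  | inter s₁ s₂ h₁ h₂ ih₁ ih₂ =>
    obtain ⟨d₁, hd₁s, hd₁⟩ := ih₁ hxO.1
    obtain ⟨d₂, hd₂s, hd₂⟩ := ih₂ hxO.2
    obtain ⟨c, hc, hd₁c, hd₂c⟩ := hD.2 d₁ hd₁ d₂ hd₂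
    have hopen : ∀ s, GenerateOpen g s → IsOpen s := fun s hs => ht ▸ hs
    exact ⟨c, ⟨(specLE_iff_specializes.1 hd₁c).mem_open (hopen _ h₁) hd₁s,
      (specLE_iff_specializes.1 hd₂c).mem_open (hopen _ h₂) hd₂s⟩, hc⟩
  | sUnion 𝒮 _ ih =>
    obtain ⟨s, hs, hxs⟩ := hxO
    obtain ⟨d, hds, hd⟩ := ih s hs hxs
    exact ⟨d, ⟨s, hs, hds⟩, hd⟩

section Tapered

variable {X : Type u} [TopologicalSpace X]

theorem tapered_closure_singleton (x : X) : Tapered X (closure {x}) := by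
  intro Y tY _ f hf
  refine ⟨f x, ?_, fun t ht => ht (f x) ⟨x, subset_closure rfl, rfl⟩⟩
  have h := image_closure_subset_closure_image (s := {x}) hf
  rwa [image_singleton] at h

/-- The supremum of `f '' closure (⋃ i, s i)` is the supremum of the directed family of
suprema of the `f '' s i`, which exists because the target is a monotone convergence space. -/
theorem Tapered.closure_iUnion {ι : Type*} [Nonempty ι] {s : ι → Set X}
    (hdir : Directed (· ⊆ ·) s) (htap : ∀ i, Tapered X (s i)) :
    Tapered X (closure (⋃ i, s i)) := by
  intro Y tY hY f hf
  choose z hz using fun i => htap i Y tY hY f hf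
  have hz_mono : ∀ i j, s i ⊆ s j → specLE (z i) (z j) := fun i j hij =>
    (hz i).2 _ fun _ ⟨x, hx, hfx⟩ => (hz j).1 _ ⟨x, hij hx, hfx⟩
  have hdir_z : DirectedSubset specLE (range z) := by
    refine ⟨range_nonempty z, ?_⟩
    rintro _ ⟨i, rfl⟩ _ ⟨j, rfl⟩
    obtain ⟨k, hik, hjk⟩ := hdir i j
    exact ⟨z k, mem_range_self k, hz_mono i k hik, hz_mono j k hjk⟩
  obtain ⟨t, ht⟩ := hY.2 _ hdir_z
  rw [closure_eq_closure_singleton_iff] at ht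
  refine ⟨t, ?_, fun u hu => ?_⟩
  · refine (image_closure_subset_closure_image hf).trans
      (isClosed_closure.closure_subset_iff.2 ?_)
    rintro _ ⟨x, hx, rfl⟩
    obtain ⟨i, hxi⟩ := mem_iUnion.1 hx
    exact specLE_trans ((hz i).1 _ ⟨x, hxi, rfl⟩) (ht.1 ⟨i, rfl⟩)
  · refine isClosed_closure.closure_subset_iff.2 ?_ ht.2
    rintro _ ⟨i, rfl⟩
    exact (hz i).2 u fun _ ⟨x, hx, hfx⟩ =>
      hu _ ⟨x, subset_closure (mem_iUnion_of_mem i hx), hfx⟩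

end Tapered

namespace Dcompletion

variable {X : Type u} [TopologicalSpace X]

instance : TopologicalSpace (Dcompletion X) := dTop X

instance : PartialOrder (Dcompletion X) := PartialOrder.lift Subtype.val Subtype.val_injective

/-- The subbasic open set `U^d`. -/
def basicOpen (U : Set X) : Set (Dcompletion X) := {A | (A.1 ∩ U).Nonempty}

theorem topology_eq_generateFrom :
    (inferInstance : TopologicalSpace (Dcompletion X)) =
      generateFrom {s | ∃ U, IsOpen U ∧ s = basicOpen U} :=
  rfl

theorem isOpen_basicOpen {U : Set X} (hU : IsOpen U) : IsOpen (basicOpen U) :=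
  .basic _ ⟨U, hU, rfl⟩

theorem isUpperSet_basicOpen (U : Set X) : IsUpperSet (basicOpen U) :=
  fun _ _ hAB hA => hA.mono (inter_subset_inter_left _ hAB)

theorem continuous_of_isOpen_preimage_basicOpen {C : Type*} [TopologicalSpace C]
    {ρ : C → Dcompletion X} (h : ∀ U, IsOpen U → IsOpen (ρ ⁻¹' basicOpen U)) : Continuous ρ :=
  continuous_generateFrom_iff.2 (by rintro _ ⟨U, hU, rfl⟩; exact h U hU)

theorem specLE_iff_le {A B : Dcompletion X} : specLE A B ↔ A ≤ B := by
  refine ⟨fun h x hxA => ?_, fun h => ?_⟩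
  · by_contra hxB
    obtain ⟨_, ⟨y, hyB, hy⟩, rfl⟩ :=
      mem_closure_iff.1 h _ (isOpen_basicOpen B.2.1.isOpen_compl) ⟨x, hxA, hxB⟩
    exact hy hyB
  · refine mem_closure_of_forall_generator topology_eq_generateFrom
      ⟨singleton_nonempty B, ?_⟩ ?_
    · rintro _ rfl _ rfl
      exact ⟨_, rfl, subset_closure rfl, subset_closure rfl⟩
    · rintro _ ⟨U, -, rfl⟩ hA
      exact ⟨B, isUpperSet_basicOpen U h hA, rfl⟩

instance : T0Space (Dcompletion X) :=
  (t0Space_iff_inseparable _).2 fun _ _ h =>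
    have h := inseparable_iff_specializes_and.1 h
    le_antisymm (specLE_iff_le.1 (specLE_iff_specializes.2 h.2))
      (specLE_iff_le.1 (specLE_iff_specializes.2 h.1))

def eta (x : X) : Dcompletion X := ⟨closure {x}, isClosed_closure, tapered_closure_singleton x⟩

theorem eta_le_iff {x : X} {A : Dcompletion X} : eta x ≤ A ↔ x ∈ A.1 :=
  A.2.1.closure_subset_iff.trans singleton_subset_iff

theorem continuous_eta : Continuous (eta : X → Dcompletion X) := by
  refine continuous_of_isOpen_preimage_basicOpen fun U hU => ?_
  convert hU using 1
  ext x
  exact (closure_inter_open_nonempty_iff hU).trans singleton_inter_nonempty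

theorem subset_closure_iUnion_of_mem_closure {𝒟 : Set (Dcompletion X)} {A : Dcompletion X}
    (hA : A ∈ closure 𝒟) : A.1 ⊆ closure (⋃ B : 𝒟, B.1.1) := by
  intro x hxA
  by_contra hx
  obtain ⟨B, ⟨y, hyB, hy⟩, hB⟩ :=
    mem_closure_iff.1 hA _ (isOpen_basicOpen isClosed_closure.isOpen_compl) ⟨x, hxA, hx⟩
  exact hy (subset_closure (mem_iUnion_of_mem ⟨B, hB⟩ hyB))

theorem directedOn_of_directedSubset {𝒟 : Set (Dcompletion X)}
    (h𝒟 : DirectedSubset specLE 𝒟) : DirectedOn (· ≤ ·) 𝒟 := fun A hA B hB => by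
  obtain ⟨C, hC, hAC, hBC⟩ := h𝒟.2 A hA B hB
  exact ⟨C, hC, specLE_iff_le.1 hAC, specLE_iff_le.1 hBC⟩

theorem monotoneConvergenceSpace : MonotoneConvergenceSpace (Dcompletion X) := by
  refine ⟨inferInstance, fun 𝒟 h𝒟 => ?_⟩
  have : Nonempty 𝒟 := h𝒟.1.to_subtype
  let S : Dcompletion X := ⟨closure (⋃ B : 𝒟, B.1.1), isClosed_closure,
    Tapered.closure_iUnion (directedOn_iff_directed.1 (directedOn_of_directedSubset h𝒟))
      fun B => B.1.2.2⟩
  refine ⟨S, closure_eq_closure_singleton_iff.2 ⟨fun B hB => ?_, ?_⟩⟩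
  · exact specLE_iff_le.2
      ((subset_iUnion (fun B : 𝒟 => B.1.1) ⟨B, hB⟩).trans subset_closure)
  · refine mem_closure_of_forall_generator topology_eq_generateFrom h𝒟 ?_
    rintro _ ⟨U, hU, rfl⟩ hSU
    have h := (closure_inter_open_nonempty_iff hU).1 hSU
    rw [iUnion_inter] at h
    obtain ⟨B, hB⟩ := nonempty_iUnion.1 h
    exact ⟨B.1, hB, B.2⟩

end Dcompletion

section Probe

variable {P : Type u} [Preorder P] {X : Type u} [TopologicalSpace X]

namespace Dcompletion

def probeMap (φ : P → Dcompletion X) (S : Dcompletion X) : WithTop P → Dcompletion X :=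
  WithTop.recTopCoe S φ

theorem monotone_probeMap {φ : P → Dcompletion X} (hφ : Monotone φ) {S : Dcompletion X}
    (hφS : ∀ p, φ p ≤ S) : Monotone (probeMap φ S) := by
  intro x y hxy
  induction y with
  | top => induction x with
    | top => exact le_rfl
    | coe p => exact hφS p
  | coe q => induction x with
    | top => exact (WithTop.not_top_le_coe q hxy).elim
    | coe p => exact hφ (WithTop.coe_le_coe.1 hxy)

end Dcompletion

variable (P) [IsDirectedOrder P] [Nonempty P]

/-- The directed set `P` with a limit point `⊤` adjoined. -/
def probeTopology : TopologicalSpace (WithTop P) where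
  IsOpen W := IsUpperSet W ∧ (⊤ ∈ W → ∃ p : P, (p : WithTop P) ∈ W)
  isOpen_univ := ⟨isUpperSet_univ, fun _ => ⟨Classical.arbitrary P, trivial⟩⟩
  isOpen_inter W₁ W₂ h₁ h₂ := by
    refine ⟨h₁.1.inter h₂.1, fun ⟨ht₁, ht₂⟩ => ?_⟩
    obtain ⟨p₁, hp₁⟩ := h₁.2 ht₁
    obtain ⟨p₂, hp₂⟩ := h₂.2 ht₂
    obtain ⟨q, hpq₁, hpq₂⟩ := exists_ge_ge p₁ p₂
    exact ⟨q, h₁.1 (WithTop.coe_le_coe.2 hpq₁) hp₁, h₂.1 (WithTop.coe_le_coe.2 hpq₂) hp₂⟩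
  isOpen_sUnion 𝒲 h := by
    refine ⟨isUpperSet_sUnion fun W hW => (h W hW).1, fun ⟨W, hW, ht⟩ => ?_⟩
    obtain ⟨p, hp⟩ := (h W hW).2 ht
    exact ⟨p, W, hW, hp⟩

/-- Each principal upper set `Ici p` is an open neighbourhood of `p` contained in every open
set containing `p`. -/
theorem coreCompact_probeTopology : @CoreCompact (WithTop P) (probeTopology P) := by
  intro W hW x hx
  obtain ⟨p, hpW, hpx⟩ : ∃ p : P, (p : WithTop P) ∈ W ∧ (p : WithTop P) ≤ x := by
    induction x with
    | top => obtain ⟨p, hp⟩ := hW.2 hx; exact ⟨p, hp, le_top⟩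
    | coe q => exact ⟨q, hx, le_rfl⟩
  refine ⟨Ici (p : WithTop P), ⟨isUpperSet_Ici _, fun _ => ⟨p, mem_Ici.2 le_rfl⟩⟩, hpx, ?_⟩
  intro 𝒮 h𝒮 hcov
  obtain ⟨O, hO𝒮, hpO⟩ := hcov hpW
  exact ⟨{O}, by simpa using hO𝒮, fun y hy => ⟨O, by simp, (h𝒮 O hO𝒮).1 hy hpO⟩⟩

variable {P}

namespace Dcompletion

theorem continuous_probeMap {φ : P → Dcompletion X} (hφ : Monotone φ) {S : Dcompletion X}
    (hφS : ∀ p, φ p ≤ S) (hS : S.1 ⊆ closure (⋃ p, (φ p).1)) :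
    @Continuous _ _ (probeTopology P) _ (probeMap φ S) := by
  let _ := probeTopology P
  refine continuous_of_isOpen_preimage_basicOpen fun U hU =>
    ⟨(isUpperSet_basicOpen U).preimage (monotone_probeMap hφ hφS), fun hSU => ?_⟩
  have h : ((⋃ p, (φ p).1) ∩ U).Nonempty :=
    (closure_inter_open_nonempty_iff hU).1 (hSU.mono (inter_subset_inter_left _ hS))
  rw [iUnion_inter] at h
  exact nonempty_iUnion.1 h

theorem isOpen_preimage_probeMap_of_ccgOpen {V : Set (Dcompletion X)}
    (hV : ccgOpen (Dcompletion X) V) {φ : P → Dcompletion X} (hφ : Monotone φ)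
    {S : Dcompletion X} (hφS : ∀ p, φ p ≤ S) (hS : S.1 ⊆ closure (⋃ p, (φ p).1)) :
    IsOpen[probeTopology P] (probeMap φ S ⁻¹' V) :=
  hV _ _ (coreCompact_probeTopology P) _ (continuous_probeMap hφ hφS hS)

end Dcompletion

end Probe

namespace Dcompletion

variable {X : Type u} [TopologicalSpace X] {V : Set (Dcompletion X)}

theorem isUpperSet_of_ccgOpen (hV : ccgOpen (Dcompletion X) V) : IsUpperSet V := by
  intro A B hAB hA
  let P := ({A, B} : Set (Dcompletion X))
  have : IsDirectedOrder P := (directedOn_pair hAB).isDirectedOrder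
  have : Nonempty P := ⟨⟨A, mem_insert A {B}⟩⟩
  have hPB : ∀ C : P, C.1 ≤ B := fun C =>
    C.2.elim (fun h => h ▸ hAB) (fun h => (mem_singleton_iff.1 h).le)
  have hB : B.1 ⊆ closure (⋃ C : P, C.1.1) :=
    (subset_iUnion (fun C : P => C.1.1) ⟨B, mem_insert_of_mem A rfl⟩).trans subset_closure
  have hopen := isOpen_preimage_probeMap_of_ccgOpen hV (Subtype.mono_coe _) hPB hB
  exact hopen.1 (WithTop.coe_le_coe.2
    (show (⟨A, mem_insert A {B}⟩ : P) ≤ ⟨B, mem_insert_of_mem A rfl⟩ from hAB)) hA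

theorem inter_nonempty_of_ccgOpen (hV : ccgOpen (Dcompletion X) V) {𝒟 : Set (Dcompletion X)}
    (h𝒟 : DirectedSubset specLE 𝒟) {S : Dcompletion X} (hS : closure 𝒟 = closure {S})
    (hSV : S ∈ V) : (𝒟 ∩ V).Nonempty := by
  have : IsDirectedOrder 𝒟 := (directedOn_of_directedSubset h𝒟).isDirectedOrder
  have : Nonempty 𝒟 := h𝒟.1.to_subtype
  rw [closure_eq_closure_singleton_iff] at hS
  obtain ⟨B, hB⟩ := (isOpen_preimage_probeMap_of_ccgOpen hV (Subtype.mono_coe _)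
    (fun B => specLE_iff_le.1 (hS.1 B.2)) (subset_closure_iUnion_of_mem_closure hS.2)).2 hSV
  exact ⟨B.1, B.2, hB⟩

end Dcompletion

/-- `M` with two incomparable points added above all of `M`. -/
inductive WithTwoTops (M : Type u) : Type u
  | of : M → WithTwoTops M
  | top : Bool → WithTwoTops M

namespace WithTwoTops

variable {M : Type u}

theorem preimage_of_eq_empty {T : Set (WithTwoTops M)} (hT : T ⊆ range top) : of ⁻¹' T = ∅ :=
  eq_empty_of_forall_notMem fun _ hm => by
    obtain ⟨_, h⟩ := hT hm
    exact nomatch h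

variable [TopologicalSpace M]

instance : TopologicalSpace (WithTwoTops M) where
  IsOpen O := IsOpen (of ⁻¹' O) ∧ ((of ⁻¹' O).Nonempty → ∀ b, top b ∈ O)
  isOpen_univ := ⟨isOpen_univ, fun _ _ => trivial⟩
  isOpen_inter O₁ O₂ h₁ h₂ := ⟨h₁.1.inter h₂.1, fun hne b =>
    ⟨h₁.2 (hne.mono inter_subset_left) b, h₂.2 (hne.mono inter_subset_right) b⟩⟩
  isOpen_sUnion 𝒪 h := by
    refine ⟨?_, ?_⟩
    · rw [preimage_sUnion]
      exact isOpen_biUnion fun O hO => (h O hO).1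
    · rintro ⟨m, O, hO, hm⟩ b
      exact ⟨O, hO, (h O hO).2 ⟨m, hm⟩ b⟩

theorem continuous_of : Continuous (of : M → WithTwoTops M) :=
  continuous_def.2 fun _ h => h.1

theorem isOpen_of_subset_range_top {T : Set (WithTwoTops M)} (hT : T ⊆ range top) :
    IsOpen T :=
  ⟨preimage_of_eq_empty hT ▸ isOpen_empty,
    fun hne => (hne.ne_empty (preimage_of_eq_empty hT)).elim⟩

theorem isInducing_of : IsInducing (of : M → WithTwoTops M) := by
  refine ⟨TopologicalSpace.ext (funext fun W => propext ⟨fun hW => ?_, ?_⟩)⟩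
  · have hpre : of ⁻¹' (of '' W ∪ range top) = W := by
      rw [preimage_union, preimage_image_eq _ fun _ _ => of.inj,
        preimage_of_eq_empty subset_rfl, union_empty]
    exact isOpen_induced_iff.2
      ⟨of '' W ∪ range top, ⟨by rw [hpre]; exact hW, fun _ b => .inr ⟨b, rfl⟩⟩, hpre⟩
  · rintro ⟨O, hO, rfl⟩
    exact hO.1

theorem specLE_of_top (m : M) (b : Bool) : specLE (of m) (top b) :=
  mem_closure_iff.2 fun _ hO hm => ⟨top b, hO.2 ⟨m, hm⟩ b, rfl⟩

theorem eq_top_of_specLE {b : Bool} {y : WithTwoTops M} (h : specLE (top b) y) : y = top b := by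
  obtain ⟨_, rfl, rfl⟩ :=
    mem_closure_iff.1 h _ (isOpen_of_subset_range_top (singleton_subset_iff.2 ⟨b, rfl⟩)) rfl
  rfl

theorem specLE_of_iff {m m' : M} : specLE (of m) (of m') ↔ specLE m m' := by
  simp only [specLE_iff_specializes, isInducing_of.specializes_iff]

instance [T0Space M] : T0Space (WithTwoTops M) := by
  refine (t0Space_iff_inseparable _).2 fun x y h => ?_
  rw [inseparable_iff_specializes_and, ← specLE_iff_specializes, ← specLE_iff_specializes] at h
  cases x with
  | top b => exact (eq_top_of_specLE h.2).symm
  | of m => cases y with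
    | top b => exact eq_top_of_specLE h.1
    | of m' =>
      rw [specLE_of_iff, specLE_of_iff, specLE_iff_specializes, specLE_iff_specializes,
        ← inseparable_iff_specializes_and] at h
      rw [h.eq]

theorem monotoneConvergenceSpace (hM : MonotoneConvergenceSpace M) :
    MonotoneConvergenceSpace (WithTwoTops M) := by
  have := hM.1
  refine ⟨inferInstance, fun D hD => ?_⟩
  by_cases htop : ∃ b, top b ∈ D
  · obtain ⟨b, hb⟩ := htop
    refine ⟨top b, closure_eq_closure_singleton_iff.2 ⟨fun d hd => ?_, subset_closure hb⟩⟩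
    obtain ⟨c, -, hdc, hbc⟩ := hD.2 d hd _ hb
    rwa [eq_top_of_specLE hbc] at hdc
  · push Not at htop
    have hD_eq : of '' (of ⁻¹' D) = D := image_preimage_eq_of_subset fun d hd => by
      cases d with
      | of m => exact ⟨m, rfl⟩
      | top b => exact (htop b hd).elim
    have hD' : DirectedSubset specLE (of ⁻¹' D) := by
      refine ⟨?_, fun a ha a' ha' => ?_⟩
      · obtain ⟨_, ⟨m, hm, rfl⟩⟩ := hD_eq.symm ▸ hD.1
        exact ⟨m, hm⟩
      obtain ⟨c, hc, hac, hac'⟩ := hD.2 _ ha _ ha'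
      obtain ⟨m, hm, rfl⟩ := hD_eq.symm ▸ hc
      exact ⟨m, hm, specLE_of_iff.1 hac, specLE_of_iff.1 hac'⟩
    obtain ⟨m, hm⟩ := hM.2 _ hD'
    exact ⟨of m, hD_eq ▸ continuous_of.closure_image_eq_closure_singleton hm⟩

open Classical in
noncomputable def collapse {Y : Type u} (O : Set Y) (y : Y) : WithTwoTops ↥Oᶜ :=
  if h : y ∈ O then top true else of ⟨y, h⟩

theorem continuous_collapse_comp {Z Y : Type u} [TopologicalSpace Z] [TopologicalSpace Y]
    {g : Z → Y} (hg : Continuous g) {O : Set Y} (hO : IsOpen (g ⁻¹' O)) :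
    Continuous (collapse O ∘ g) := by
  refine continuous_def.2 fun W ⟨hW, htop⟩ => ?_
  obtain ⟨W', hW', hWW'⟩ := IsInducing.subtypeVal.isOpen_iff.1 hW
  by_cases ht : top true ∈ W
  · convert hO.union (hW'.preimage hg) using 1
    ext z
    by_cases hz : g z ∈ O
    · simp [collapse, hz, ht]
    · simp only [mem_preimage, Function.comp_apply, collapse, hz, dite_false, mem_union,
        false_or]
      exact (Set.ext_iff.1 hWW' ⟨g z, hz⟩).symm
  · convert isOpen_empty using 1
    refine eq_empty_of_forall_notMem fun z hz => ?_
    by_cases hgz : g z ∈ O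
    · simp [collapse, hgz, ht] at hz
    · simp only [mem_preimage, Function.comp_apply, collapse, hgz, dite_false] at hz
      exact ht (htop ⟨_, hz⟩ true)

end WithTwoTops

theorem ccGenerated_iff {X : Type u} [TopologicalSpace X] :
    CCGenerated X ↔ ∀ V, ccgOpen X V → IsOpen V := by
  refine ⟨fun h V hV => h ▸ hV, fun h => TopologicalSpace.ext (funext fun V => propext
    ⟨h V, fun hV _ _ _ _ hρ => hV.preimage hρ⟩)⟩

namespace Dcompletion

open WithTwoTops

variable {X : Type u} [TopologicalSpace X] {V : Set (Dcompletion X)}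

theorem monotoneConvergenceSpace_compl_of_ccgOpen (hV : ccgOpen (Dcompletion X) V) :
    MonotoneConvergenceSpace ↥Vᶜ :=
  monotoneConvergenceSpace.subtype fun _ hDV hD _ hS hSV =>
    let ⟨_, hB, hBV⟩ := inter_nonempty_of_ccgOpen hV hD hS hSV
    hDV hB hBV

theorem basicOpen_preimage_eta_subset_of_ccgOpen (hV : ccgOpen (Dcompletion X) V) :
    basicOpen (eta ⁻¹' V) ⊆ V := fun _ ⟨_, hxA, hxV⟩ =>
  isUpperSet_of_ccgOpen hV (eta_le_iff.2 hxA) hxV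

/-- If `A ∈ V` missed `η⁻¹ V`, the image of `A` under the collapse of `V` would lie in the
monotone convergence space `Vᶜ` with two tops adjoined; its supremum, which exists as `A` is
tapered, cannot be either top, so it is a point of `Vᶜ` above `A`. -/
theorem subset_basicOpen_preimage_eta_of_ccgOpen (hV : ccgOpen (Dcompletion X) V)
    (hU : IsOpen (eta ⁻¹' V)) : V ⊆ basicOpen (eta ⁻¹' V) := by
  intro A hA
  by_contra hAU
  have hAV : ∀ x ∈ A.1, eta x ∉ V := fun x hx hxV => hAU ⟨x, hx, hxV⟩
  have hcollapse : ∀ x ∈ A.1, ∃ h, (collapse V ∘ eta) x = of ⟨eta x, h⟩ := fun x hx =>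
    ⟨hAV x hx, dif_neg (hAV x hx)⟩
  obtain ⟨s, hs_ub, hs_least⟩ := A.2.2 _ _
    (WithTwoTops.monotoneConvergenceSpace (monotoneConvergenceSpace_compl_of_ccgOpen hV)) _
    (continuous_collapse_comp continuous_eta hU)
  cases s with
  | top b =>
    have hub : IsUBWrt specLE ((collapse V ∘ eta) '' A.1) (top !b) := by
      rintro _ ⟨x, hx, rfl⟩
      obtain ⟨_, hx'⟩ := hcollapse x hx
      exact hx' ▸ specLE_of_top _ _
    simpa using eq_top_of_specLE (hs_least _ hub)
  | of m =>
    refine m.2 (isUpperSet_of_ccgOpen hV (fun x hx => ?_) hA)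
    obtain ⟨_, hx'⟩ := hcollapse x hx
    have hle := specLE_of_iff.1 (hx' ▸ hs_ub _ ⟨x, hx, rfl⟩)
    exact eta_le_iff.1 (specLE_iff_le.1 (hle.map continuous_subtype_val))

end Dcompletion

theorem stmt11_general {X : Type u} [TopologicalSpace X] (h : CCGenerated X) :
    @CCGenerated (Dcompletion X) (dTop X) := by
  refine ccGenerated_iff.2 fun V hV => ?_
  have hU : IsOpen (Dcompletion.eta ⁻¹' V) := ccGenerated_iff.1 h _ fun C _ hC ρ hρ =>
    hV C _ hC _ (Dcompletion.continuous_eta.comp hρ)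
  rw [(Dcompletion.subset_basicOpen_preimage_eta_of_ccgOpen hV hU).antisymm
    (Dcompletion.basicOpen_preimage_eta_subset_of_ccgOpen hV)]
  exact Dcompletion.isOpen_basicOpen hU

/-- the standard D-completion of a core compactly generated space is again
core compactly generated. -/
theorem stmt11 {X : Type u} [TopologicalSpace X] [T0Space X] (h : CCGenerated X) :
    @CCGenerated (Dcompletion X) (dTop X) :=
  stmt11_general h
end

section
/- Let f : X → Y be a continuous map where X is a well-filtered space. If Q is the intersection of a filtered family 𝒦 of compact saturated subsets of X, then ⋂_{K ∈ 𝒦} ↑f(K) = ↑f(Q). -/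
open Set TopologicalSpace

universe u

/-! A point `y` lies in `↑f(K)` exactly when `K` meets the closed set `f⁻¹(cl {y})`. If this
closed set met every `K ∈ 𝒦` but missed `⋂ 𝒦`, well-filteredness applied to its open complement
would produce some `K ∈ 𝒦` missing it. -/

section

variable {X Y : Type u} [TopologicalSpace Y]

theorem upSet_mono {A B : Set Y} (h : A ⊆ B) : upSet A ⊆ upSet B :=
  fun _ ⟨a, ha, hay⟩ => ⟨a, h ha, hay⟩

theorem mem_upSet_image_iff {f : X → Y} {K : Set X} {y : Y} :
    y ∈ upSet (f '' K) ↔ (K ∩ f ⁻¹' closure {y}).Nonempty := by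
  simp only [upSet, specLE, mem_ofPred_eq, exists_mem_image, Set.Nonempty, mem_inter_iff,
    mem_preimage]

variable [TopologicalSpace X]

theorem WellFiltered.sInter_inter_nonempty (hX : WellFiltered X) {𝒦 : Set (Set X)}
    (hne : 𝒦.Nonempty) (hcs : ∀ K ∈ 𝒦, IsCompact K ∧ Saturated K)
    (hfil : ∀ K₁ ∈ 𝒦, ∀ K₂ ∈ 𝒦, ∃ K₃ ∈ 𝒦, K₃ ⊆ K₁ ∧ K₃ ⊆ K₂) {C : Set X} (hC : IsClosed C)
    (hmeet : ∀ K ∈ 𝒦, (K ∩ C).Nonempty) : (⋂₀ 𝒦 ∩ C).Nonempty := by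
  by_contra hdisj
  have hsub : ⋂₀ 𝒦 ⊆ Cᶜ := fun x hx hxC => hdisj ⟨x, hx, hxC⟩
  obtain ⟨K, hK, hKC⟩ := hX.2 𝒦 hne
    (fun K hK => ⟨(hmeet K hK).mono inter_subset_left, hcs K hK⟩) hfil Cᶜ hC.isOpen_compl hsub
  obtain ⟨x, hxK, hxC⟩ := hmeet K hK
  exact hKC hxK hxC

end

/-- if `f : X → Y` is continuous with `X` well-filtered and `Q` is the
intersection of a filtered family `𝒦` of compact saturated subsets of `X`, then
`⋂_{K ∈ 𝒦} ↑f(K) = ↑f(Q)`. -/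
theorem stmt12 {X Y : Type u} [TopologicalSpace X] [TopologicalSpace Y]
    (hX : WellFiltered X) (f : X → Y) (hf : Continuous f)
    (𝒦 : Set (Set X)) (hne : 𝒦.Nonempty)
    (hcs : ∀ K ∈ 𝒦, IsCompact K ∧ Saturated K)
    (hfil : ∀ K₁ ∈ 𝒦, ∀ K₂ ∈ 𝒦, ∃ K₃ ∈ 𝒦, K₃ ⊆ K₁ ∧ K₃ ⊆ K₂) :
    (⋂ K ∈ 𝒦, upSet (f '' K)) = upSet (f '' ⋂₀ 𝒦) := by
  refine Subset.antisymm (fun y hy => ?_) (subset_iInter₂ fun K hK =>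
    upSet_mono (image_mono (sInter_subset_of_mem hK)))
  rw [mem_iInter₂] at hy
  exact mem_upSet_image_iff.2 <| hX.sInter_inter_nonempty hne hcs hfil
    (isClosed_closure.preimage hf) fun K hK => mem_upSet_image_iff.1 (hy K hK)
end

section
/- If X is a locally compact sober space, then the upper Vietoris topology on Q(X) coincides with the Scott topology on Q(X) ordered by reverse inclusion. -/
open Set TopologicalSpace

universe u

/-- The nonempty compact saturated subsets of `X`. -/
abbrev QSet (X : Type u) [TopologicalSpace X] :=
  {K : Set X // K.Nonempty ∧ IsCompact K ∧ Saturated K}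

/-- The upper Vietoris topology on `Q(X)`, generated by the sets `☐U = {K : K ⊆ U}`. -/
def upperVietoris (X : Type u) [TopologicalSpace X] : TopologicalSpace (QSet X) :=
  generateFrom {s : Set (QSet X) |
    ∃ U : Set X, IsOpen U ∧ s = {K : QSet X | (K : Set X) ⊆ U}}

/-- Reverse inclusion, the specialization order of the Smyth power space. -/
def revIncl {X : Type u} [TopologicalSpace X] (K L : QSet X) : Prop :=
  (L : Set X) ⊆ (K : Set X)

/-!
Every Scott open `𝒰 ∋ K` contains `☐(interior L)` for some compact saturated neighbourhood `L`
of `K`: by local compactness `K` is the directed supremum (the intersection) of its compact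
saturated neighbourhoods, so one of them already lies in `𝒰`. Conversely `☐U` is Scott open
because sober spaces are well-filtered: if no member of a filtered family of compact saturated
sets lies in `U`, Zorn's lemma gives a minimal closed set inside `X \ U` meeting every member;
minimality makes it irreducible, and its generic point lies in every member (they are saturated),
so their intersection, which is the supremum of the family, is not contained in `U`.
-/

open Topology

section Saturation

variable {X : Type u} [TopologicalSpace X]

def saturation (C : Set X) : Set X := ⋂₀ {U : Set X | IsOpen U ∧ C ⊆ U}

lemma subset_saturation (C : Set X) : C ⊆ saturation C :=
  fun _ hx _ hU => hU.2 hx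

lemma saturation_subset_of_isOpen {C U : Set X} (hU : IsOpen U) (hCU : C ⊆ U) :
    saturation C ⊆ U :=
  sInter_subset_of_mem ⟨hU, hCU⟩

lemma saturated_saturation (C : Set X) : Saturated (saturation C) :=
  Subset.antisymm (fun _ hx _ hU => hU.2 hx)
    (fun _ hx _ hU => hx _ ⟨hU.1, saturation_subset_of_isOpen hU.1 hU.2⟩)

lemma IsCompact.saturation {C : Set X} (hC : IsCompact C) : IsCompact (saturation C) := by
  refine isCompact_of_finite_subcover fun V hV hcover => ?_
  obtain ⟨t, ht⟩ := hC.elim_finite_subcover V hV ((subset_saturation C).trans hcover)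
  exact ⟨t, saturation_subset_of_isOpen (isOpen_biUnion fun i _ => hV i) ht⟩

lemma Saturated.sInter {𝒦 : Set (Set X)} (h𝒦 : ∀ K ∈ 𝒦, Saturated K) : Saturated (⋂₀ 𝒦) := by
  refine Subset.antisymm (fun _ hx _ hU => hU.2 hx) fun x hx K hK => ?_
  rw [h𝒦 K hK]
  exact fun U hU => hx U ⟨hU.1, (sInter_subset_of_mem hK).trans hU.2⟩

lemma Saturated.exists_isOpen_notMem {K : Set X} (hK : Saturated K) {x : X} (hx : x ∉ K) :
    ∃ U, IsOpen U ∧ K ⊆ U ∧ x ∉ U := by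
  rw [hK, mem_sInter] at hx
  push Not at hx
  obtain ⟨U, ⟨hU, hKU⟩, hxU⟩ := hx
  exact ⟨U, hU, hKU, hxU⟩

lemma Saturated.mem_of_specializes {K : Set X} (hK : Saturated K) {x y : X} (hxy : x ⤳ y)
    (hy : y ∈ K) : x ∈ K := by
  by_contra hx
  obtain ⟨U, hU, hKU, hxU⟩ := hK.exists_isOpen_notMem hx
  exact hxU (hxy.mem_open hU (hKU hy))

end Saturation

section WellFiltered

variable {X : Type u} [TopologicalSpace X]

def IsClosedTransversal (𝒦 : Set (Set X)) (A : Set X) : Prop :=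
  IsClosed A ∧ ∀ K ∈ 𝒦, (A ∩ K).Nonempty

lemma IsClosedTransversal.sInter_of_isChain {𝒦 c : Set (Set X)} (h𝒦 : ∀ K ∈ 𝒦, IsCompact K)
    (hc : ∀ A ∈ c, IsClosedTransversal 𝒦 A) (hchain : IsChain (· ⊆ ·) c) (hne : c.Nonempty) :
    IsClosedTransversal 𝒦 (⋂₀ c) := by
  refine ⟨isClosed_sInter fun A hA => (hc A hA).1, fun K hK => ?_⟩
  have : Nonempty c := hne.to_subtype
  rw [sInter_eq_iInter, inter_comm, nonempty_iff_ne_empty]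
  intro hempty
  obtain ⟨⟨A, hA⟩, hAK⟩ := (h𝒦 K hK).elim_directed_family_closed (fun A : c => (A : Set X))
    (fun A => (hc A A.2).1) hempty fun A B =>
      (hchain.total A.2 B.2).elim (fun h => ⟨A, subset_rfl, h⟩) fun h => ⟨B, h, subset_rfl⟩
  exact ((hc A hA).2 K hK).ne_empty (by rwa [inter_comm])

lemma exists_minimal_isClosedTransversal {𝒦 : Set (Set X)} (h𝒦 : ∀ K ∈ 𝒦, IsCompact K)
    {A : Set X} (hA : IsClosedTransversal 𝒦 A) :
    ∃ B ⊆ A, Minimal (IsClosedTransversal 𝒦) B :=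
  zorn_superset_nonempty {B | IsClosedTransversal 𝒦 B} (fun c hc hchain hne =>
    ⟨⋂₀ c, .sInter_of_isChain h𝒦 hc hchain hne, fun _ => sInter_subset_of_mem⟩) A hA

lemma Minimal.isIrreducible_of_isClosedTransversal {𝒦 : Set (Set X)} {A : Set X}
    (hA : Minimal (IsClosedTransversal 𝒦) A) (hne : 𝒦.Nonempty)
    (hdir : ∀ K₁ ∈ 𝒦, ∀ K₂ ∈ 𝒦, ∃ K₃ ∈ 𝒦, K₃ ⊆ K₁ ∧ K₃ ⊆ K₂) : IsIrreducible A := by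
  obtain ⟨K, hK⟩ := hne
  refine ⟨(hA.prop.2 K hK).mono inter_subset_left,
    isPreirreducible_iff_isClosed_union_isClosed.2 fun Z₁ Z₂ hZ₁ hZ₂ hAZ => ?_⟩
  by_contra! hnot
  have misses : ∀ Z, IsClosed Z → ¬A ⊆ Z → ∃ K ∈ 𝒦, A ∩ Z ∩ K = ∅ := by
    intro Z hZ hAZ
    by_contra! hmeets
    exact hAZ ((hA.eq_of_subset ⟨hA.prop.1.inter hZ, hmeets⟩ inter_subset_left).symm ▸
      inter_subset_right)
  obtain ⟨K₁, hK₁, h₁⟩ := misses Z₁ hZ₁ hnot.1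
  obtain ⟨K₂, hK₂, h₂⟩ := misses Z₂ hZ₂ hnot.2
  obtain ⟨K₃, hK₃, h₃₁, h₃₂⟩ := hdir K₁ hK₁ K₂ hK₂
  obtain ⟨x, hxA, hxK₃⟩ := hA.prop.2 K₃ hK₃
  rcases hAZ hxA with hxZ | hxZ
  · exact h₁.subset ⟨⟨hxA, hxZ⟩, h₃₁ hxK₃⟩
  · exact h₂.subset ⟨⟨hxA, hxZ⟩, h₃₂ hxK₃⟩

lemma SoberSpace.wellFiltered (hs : SoberSpace X) : WellFiltered X := by
  refine ⟨hs.1, fun 𝒦 hne hQ hdir U hU hsub => ?_⟩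
  by_contra! hcon
  have hUc : IsClosedTransversal 𝒦 Uᶜ := ⟨hU.isClosed_compl, fun K hK => by
    rw [inter_comm]
    exact sdiff_nonempty.2 (hcon K hK)⟩
  obtain ⟨A, hAU, hA⟩ := exists_minimal_isClosedTransversal (fun K hK => (hQ K hK).2.1) hUc
  obtain ⟨x, rfl, -⟩ := hs.2 A (hA.isIrreducible_of_isClosedTransversal hne hdir) hA.prop.1
  have hx : x ∈ ⋂₀ 𝒦 := fun K hK => by
    obtain ⟨y, hy, hyK⟩ := hA.prop.2 K hK
    exact (hQ K hK).2.2.mem_of_specializes (specializes_iff_mem_closure.2 hy) hyK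
  exact hAU (subset_closure rfl) (hsub hx)

end WellFiltered

section SmythPowerspace

variable {X : Type u} [TopologicalSpace X]

lemma isOpen_upperVietoris_box {U : Set X} (hU : IsOpen U) :
    IsOpen[upperVietoris X] {K : QSet X | (K : Set X) ⊆ U} :=
  .basic _ ⟨U, hU, rfl⟩

lemma WellFiltered.exists_subset_of_directedSubset (hX : WellFiltered X) {D : Set (QSet X)}
    (hD : DirectedSubset revIncl D) {U : Set X} (hU : IsOpen U)
    (hDU : ⋂₀ (Subtype.val '' D) ⊆ U) : ∃ L ∈ D, (L : Set X) ⊆ U := by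
  obtain ⟨_, ⟨L, hL, rfl⟩, hLU⟩ := hX.2 _ (hD.1.image _) (by rintro _ ⟨L, -, rfl⟩; exact L.2)
    (by
      rintro _ ⟨L₁, hL₁, rfl⟩ _ ⟨L₂, hL₂, rfl⟩
      obtain ⟨L₃, hL₃, h₁, h₂⟩ := hD.2 L₁ hL₁ L₂ hL₂
      exact ⟨L₃, mem_image_of_mem _ hL₃, h₁, h₂⟩) U hU hDU
  exact ⟨L, hL, hLU⟩

lemma WellFiltered.sInter_subset_of_isSupWrt (hX : WellFiltered X) {D : Set (QSet X)}
    (hD : DirectedSubset revIncl D) {t : QSet X} (ht : IsSupWrt revIncl D t) :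
    ⋂₀ (Subtype.val '' D) ⊆ t := by
  have hne : (⋂₀ (Subtype.val '' D)).Nonempty := by
    by_contra hempty
    obtain ⟨L, -, hL⟩ := hX.exists_subset_of_directedSubset hD isOpen_empty
      (not_nonempty_iff_eq_empty.1 hempty).subset
    exact L.2.1.ne_empty (subset_empty_iff.1 hL)
  have hcompact : IsCompact (⋂₀ (Subtype.val '' D)) := by
    refine isCompact_of_finite_subcover fun V hV hcover => ?_
    obtain ⟨L, hL, hLV⟩ := hX.exists_subset_of_directedSubset hD (isOpen_iUnion hV) hcover
    obtain ⟨s, hs⟩ := L.2.2.1.elim_finite_subcover V hV hLV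
    exact ⟨s, (sInter_subset_of_mem (mem_image_of_mem _ hL)).trans hs⟩
  have hsat : Saturated (⋂₀ (Subtype.val '' D)) :=
    Saturated.sInter (by rintro _ ⟨L, -, rfl⟩; exact L.2.2.2)
  exact ht.2 ⟨_, hne, hcompact, hsat⟩ fun L hL => sInter_subset_of_mem (mem_image_of_mem _ hL)

lemma WellFiltered.scottOpenWrt_box (hX : WellFiltered X) {U : Set X} (hU : IsOpen U) :
    ScottOpenWrt revIncl {K : QSet X | (K : Set X) ⊆ U} :=
  ⟨fun _ hK _ hKL => hKL.trans hK, fun _ hD _ ht htU =>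
    hX.exists_subset_of_directedSubset hD hU ((hX.sInter_subset_of_isSupWrt hD ht).trans htU)⟩

variable [LocallyCompactSpace X]

lemma QSet.exists_subset_interior_subset (K : QSet X) {V : Set X} (hV : IsOpen V)
    (hKV : (K : Set X) ⊆ V) : ∃ L : QSet X, (K : Set X) ⊆ interior L ∧ (L : Set X) ⊆ V := by
  obtain ⟨C, hC, hKC, hCV⟩ := exists_compact_between K.2.2.1 hV hKV
  have hKL : (K : Set X) ⊆ interior (saturation C) :=
    hKC.trans (interior_mono (subset_saturation C))
  exact ⟨⟨saturation C, K.2.1.mono (hKL.trans interior_subset), hC.saturation,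
    saturated_saturation C⟩, hKL, saturation_subset_of_isOpen hV hCV⟩

lemma QSet.directedSubset_setOf_subset_interior (K : QSet X) :
    DirectedSubset revIncl {L : QSet X | (K : Set X) ⊆ interior L} := by
  refine ⟨K.exists_subset_interior_subset isOpen_univ (subset_univ _) |>.imp fun _ h => h.1,
    fun L₁ hL₁ L₂ hL₂ => ?_⟩
  obtain ⟨L, hKL, hL⟩ := K.exists_subset_interior_subset (isOpen_interior.inter isOpen_interior)
    (subset_inter hL₁ hL₂)
  exact ⟨L, hKL, hL.trans (inter_subset_left.trans interior_subset),
    hL.trans (inter_subset_right.trans interior_subset)⟩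

lemma QSet.isSupWrt_setOf_subset_interior (K : QSet X) :
    IsSupWrt revIncl {L : QSet X | (K : Set X) ⊆ interior L} K := by
  refine ⟨fun L hL => hL.trans interior_subset, fun t ht x hxt => ?_⟩
  by_contra hxK
  obtain ⟨V, hV, hKV, hxV⟩ := K.2.2.2.exists_isOpen_notMem hxK
  obtain ⟨L, hKL, hLV⟩ := K.exists_subset_interior_subset hV hKV
  exact hxV (hLV (ht L hKL hxt))

lemma isOpen_upperVietoris_of_scottOpenWrt {𝒰 : Set (QSet X)} (h𝒰 : ScottOpenWrt revIncl 𝒰) :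
    IsOpen[upperVietoris X] 𝒰 := by
  refine @isOpen_iff_forall_mem_open _ (upperVietoris X) |>.2 fun K hK => ?_
  obtain ⟨L, hKL, hL𝒰⟩ := h𝒰.2 _ K.directedSubset_setOf_subset_interior K
    K.isSupWrt_setOf_subset_interior hK
  exact ⟨{K' : QSet X | (K' : Set X) ⊆ interior L},
    fun _ hK' => h𝒰.1 hL𝒰 (hK'.trans interior_subset), isOpen_upperVietoris_box isOpen_interior, hKL⟩

end SmythPowerspace

/-- for a locally compact sober space `X`, the upper Vietoris topology on
`Q(X)` coincides with the Scott topology of `(Q(X), ⊇)`. -/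
theorem stmt17 {X : Type u} [TopologicalSpace X] [LocallyCompactSpace X]
    (hs : SoberSpace X) :
    upperVietoris X = scottTop (revIncl (X := X)) := by
  apply le_antisymm
  · exact fun _ h𝒰 => isOpen_upperVietoris_of_scottOpenWrt h𝒰
  · exact le_generateFrom fun _ ⟨_, hU, hbox⟩ => hbox ▸ hs.wellFiltered.scottOpenWrt_box hU
end

section
/- A topological space X is core compact if and only if the set G = {(x, U) ∈ X × O(X) : x ∈ U} is open in the product X × ΣO(X), where O(X) carries the Scott topology of the inclusion order. -/
open Set TopologicalSpace

universe u

section TopDefs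

variable {X : Type u} [TopologicalSpace X]

/-!
If `X` is core compact, then around a point `(x, U)` of `G` we choose an open `V ∋ x` way below
`U`; the set of opens that `V` is way below is Scott open, because a directed union of opens is
covered by the opens way below its members, and `V` needs only finitely many of them. Conversely,
if `u × 𝒱 ⊆ G` is a box around `(x, U)`, then `u` is way below `U`: the finite unions of an open
cover of `U` form a directed family whose union lies in the Scott open `𝒱`, so one of these
finite unions already lies in `𝒱` and hence contains `u`.
-/

section WayBelow

variable {X : Type*} [TopologicalSpace X] {U V V₁ V₂ W : Set X}

lemma WayBelow.subset (hU : IsOpen U) (h : WayBelow V U) : V ⊆ U := by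
  obtain ⟨F, hF, hVF⟩ := h {U} (by simpa using hU) (sUnion_singleton U).superset
  exact hVF.trans (sUnion_subset fun W hW => (mem_singleton_iff.mp (hF hW)).subset)

lemma WayBelow.mono_right (h : WayBelow V U) (hUW : U ⊆ W) : WayBelow V W :=
  fun S hS hW => h S hS (hUW.trans hW)

lemma WayBelow.mono_left (hWV : W ⊆ V) (h : WayBelow V U) : WayBelow W U := fun S hS hU => by
  obtain ⟨F, hF, hVF⟩ := h S hS hU
  exact ⟨F, hF, hWV.trans hVF⟩

lemma WayBelow.union (h₁ : WayBelow V₁ U) (h₂ : WayBelow V₂ U) : WayBelow (V₁ ∪ V₂) U :=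
  fun S hS hU => by
    classical
    obtain ⟨F₁, hF₁, hV₁⟩ := h₁ S hS hU
    obtain ⟨F₂, hF₂, hV₂⟩ := h₂ S hS hU
    refine ⟨F₁ ∪ F₂, by simpa using union_subset hF₁ hF₂, ?_⟩
    rw [Finset.coe_union, sUnion_union]
    exact union_subset_union hV₁ hV₂

lemma wayBelow_sUnion_finset {F : Finset (Set X)} (h : ∀ W ∈ F, WayBelow W U) :
    WayBelow (⋃₀ ↑F) U := by
  classical
  induction F using Finset.induction_on with
  | empty => exact fun _ _ _ => ⟨∅, by simp⟩
  | insert W F _ ih =>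
    rw [Finset.coe_insert, sUnion_insert]
    exact (h W (F.mem_insert_self W)).union (ih fun W' hW' => h W' (F.mem_insert_of_mem hW'))

end WayBelow

lemma DirectedSubset.exists_forall_mem_finset {ι α : Type*} {le : ι → ι → Prop} {D : Set ι}
    (hD : DirectedSubset le D) {P : α → ι → Prop} (hP : ∀ a i j, P a i → le i j → P a j)
    (F : Finset α) (hF : ∀ a ∈ F, ∃ d ∈ D, P a d) : ∃ c ∈ D, ∀ a ∈ F, P a c := by
  classical
  induction F using Finset.induction_on with
  | empty =>
    obtain ⟨d, hd⟩ := hD.1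
    exact ⟨d, hd, by simp⟩
  | insert a F _ ih =>
    obtain ⟨c, hcD, hc⟩ := ih fun b hb => hF b (F.mem_insert_of_mem hb)
    obtain ⟨d, hdD, hd⟩ := hF a (F.mem_insert_self a)
    obtain ⟨e, heD, hde, hce⟩ := hD.2 d hdD c hcD
    refine ⟨e, heD, fun b hb => ?_⟩
    rcases Finset.mem_insert.mp hb with rfl | hbF
    · exact hP b d e hd hde
    · exact hP b c e (hc b hbF) hce

section Opens

variable {X : Type*} [TopologicalSpace X]

lemma isSupWrt_sUnion_image (D : Set {U : Set X // IsOpen U}) :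
    IsSupWrt (fun U V : {U : Set X // IsOpen U} => (U : Set X) ⊆ (V : Set X)) D
      ⟨⋃₀ (Subtype.val '' D), isOpen_sUnion (by rintro _ ⟨d, -, rfl⟩; exact d.2)⟩ :=
  ⟨fun d hd => subset_sUnion_of_mem (mem_image_of_mem _ hd),
    fun _ ht => sUnion_subset (by rintro _ ⟨d, hd, rfl⟩; exact ht d hd)⟩

lemma IsSupWrt.coe_eq_sUnion_image {D : Set {U : Set X // IsOpen U}} {s : {U : Set X // IsOpen U}}
    (hs : IsSupWrt (fun U V : {U : Set X // IsOpen U} => (U : Set X) ⊆ (V : Set X)) D s) :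
    (s : Set X) = ⋃₀ (Subtype.val '' D) :=
  (hs.2 _ (isSupWrt_sUnion_image D).1).antisymm ((isSupWrt_sUnion_image D).2 s hs.1)

lemma directedSubset_finite_sUnions {S : Set (Set X)} (hS : ∀ W ∈ S, IsOpen W) :
    DirectedSubset (fun U V : {U : Set X // IsOpen U} => (U : Set X) ⊆ (V : Set X))
      {A | ∃ F : Finset (Set X), ↑F ⊆ S ∧ A.1 = ⋃₀ ↑F} := by
  classical
  refine ⟨⟨⟨∅, isOpen_empty⟩, ∅, by simp⟩, ?_⟩
  rintro A ⟨F₁, hF₁, hA⟩ B ⟨F₂, hF₂, hB⟩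
  have hF : ↑(F₁ ∪ F₂) ⊆ S := by simpa using union_subset hF₁ hF₂
  refine ⟨⟨_, isOpen_sUnion fun W hW => hS W (hF hW)⟩, ⟨F₁ ∪ F₂, hF, rfl⟩, ?_, ?_⟩ <;>
    simp only [hA, hB, Finset.coe_union, sUnion_union, subset_union_left, subset_union_right]

theorem CoreCompact.scottOpen_setOf_wayBelow (hX : CoreCompact X) (V : Set X) :
    ScottOpenWrt (fun U V : {U : Set X // IsOpen U} => (U : Set X) ⊆ (V : Set X))
      {A | WayBelow V A.1} := by
  refine ⟨fun A hA B hAB => hA.mono_right hAB, fun D hD s hs hVs => ?_⟩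
  have hcover : (s : Set X) ⊆ ⋃₀ {W | IsOpen W ∧ ∃ d ∈ D, WayBelow W d.1} := by
    rw [hs.coe_eq_sUnion_image]
    rintro y ⟨_, ⟨d, hd, rfl⟩, hyd⟩
    obtain ⟨W, hW, hyW, hWd⟩ := hX d.1 d.2 y hyd
    exact ⟨W, ⟨hW, d, hd, hWd⟩, hyW⟩
  obtain ⟨F, hFS, hVF⟩ := hVs _ (fun W hW => hW.1) hcover
  obtain ⟨c, hcD, hc⟩ := hD.exists_forall_mem_finset (fun _ _ _ h hAB => h.mono_right hAB) F
    fun W hW => (hFS hW).2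
  exact ⟨c, hcD, (wayBelow_sUnion_finset hc).mono_left hVF⟩

theorem wayBelow_of_scottOpen {u U : Set X} (hU : IsOpen U) {𝒱 : Set {U : Set X // IsOpen U}}
    (h𝒱 : ScottOpenWrt (fun U V : {U : Set X // IsOpen U} => (U : Set X) ⊆ (V : Set X)) 𝒱)
    (hU𝒱 : ⟨U, hU⟩ ∈ 𝒱) (hu𝒱 : ∀ A ∈ 𝒱, u ⊆ A.1) : WayBelow u U := by
  intro S hS hUS
  set D := {A : {U : Set X // IsOpen U} | ∃ F : Finset (Set X), ↑F ⊆ S ∧ A.1 = ⋃₀ ↑F}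
  have hUD : U ⊆ ⋃₀ (Subtype.val '' D) := fun y hy => by
    obtain ⟨W, hW, hyW⟩ := hUS hy
    exact ⟨W, ⟨⟨W, hS W hW⟩, ⟨{W}, by simpa using hW, by simp⟩, rfl⟩, hyW⟩
  obtain ⟨A, ⟨F, hFS, hA⟩, hA𝒱⟩ :=
    h𝒱.2 D (directedSubset_finite_sUnions hS) _ (isSupWrt_sUnion_image D) (h𝒱.1 hU𝒱 hUD)
  exact ⟨F, hFS, hA ▸ hu𝒱 A hA𝒱⟩

end Opens

/-- `X` is core compact iff the membership set
`G = {(x, U) : x ∈ U}` is open in `X × Σ𝒪(X)`, where `𝒪(X)` carries the Scott topology of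
the inclusion order. -/
theorem stmt19 {X : Type u} [tX : TopologicalSpace X] :
    CoreCompact X ↔
      @IsOpen (X × {U : Set X // IsOpen U})
        (@instTopologicalSpaceProd X {U : Set X // IsOpen U} tX
          (scottTop (fun U V : {U : Set X // IsOpen U} => (U : Set X) ⊆ (V : Set X))))
        {p : X × {U : Set X // IsOpen U} | p.1 ∈ (p.2 : Set X)} := by
  let _ := scottTop (fun U V : {U : Set X // IsOpen U} => (U : Set X) ⊆ (V : Set X))
  constructor
  · intro hX
    refine isOpen_prod_iff.mpr fun x U hxU => ?_
    obtain ⟨V, hV, hxV, hVU⟩ := hX U.1 U.2 x hxU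
    exact ⟨V, {A | WayBelow V A.1}, hV, hX.scottOpen_setOf_wayBelow V, hxV, hVU,
      fun p hp => hp.2.subset p.2.2 hp.1⟩
  · intro hG U hU x hxU
    obtain ⟨u, 𝒱, hu, h𝒱, hxu, hU𝒱, hu𝒱⟩ := isOpen_prod_iff.mp hG x ⟨U, hU⟩ hxU
    exact ⟨u, hu, hxu, wayBelow_of_scottOpen hU h𝒱 hU𝒱 fun A hA y hy => hu𝒱 (mk_mem_prod hy hA)⟩
end TopDefs
end
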